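/- arXiv:2312.16505 — 2 statements merged into one kernel-verified Lean document; each statement's English description precedes it below -/
import Mathlib

section
/- Let A be a complex n×n H-matrix, and let M and F be complex n×n matrices satisfying ⟨M⟩ - |M - A| = ⟨A⟩ and ⟨F⟩ - |F - A| = ⟨A⟩. Then M and F are invertible and ρ(|I - F⁻¹(M + F - A)M⁻¹A|) < 1. -/
open Matrix

/-- Spectral radius of a real square matrix: the supremum of the moduli of its
complex eigenvalues. -/
noncomputable def specRad {m : Type*} [Fintype m] [DecidableEq m]
    (A : Matrix m m ℝ) : ℝ :=
  sSup ((fun z : ℂ => ‖z‖) '' spectrum ℂ (A.map Complex.ofReal))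

/-- Entrywise absolute value (modulus) of a complex matrix. -/
noncomputable def cabs {m l : Type*} (A : Matrix m l ℂ) : Matrix m l ℝ :=
  fun i j => ‖A i j‖

/-- Comparison matrix of a complex square matrix. -/
noncomputable def compMat {m : Type*} [DecidableEq m]
    (A : Matrix m m ℂ) : Matrix m m ℝ :=
  fun i j => if i = j then ‖A i j‖ else -‖A i j‖

/-- M-matrix: there is `α` with `α I - A ≥ 0` entrywise and `α > ρ(α I - A)`. -/
def IsMMat {m : Type*} [Fintype m] [DecidableEq m]
    (A : Matrix m m ℝ) : Prop :=
  ∃ α : ℝ, (∀ i j, 0 ≤ (α • (1 : Matrix m m ℝ) - A) i j) ∧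
    specRad (α • (1 : Matrix m m ℝ) - A) < α

/-- H-matrix: a complex square matrix whose comparison matrix is an M-matrix. -/
def IsHMat {m : Type*} [Fintype m] [DecidableEq m]
    (A : Matrix m m ℂ) : Prop :=
  IsMMat (compMat A)

/-!
Since `⟨A⟩` is an M-matrix, a Neumann series produces a vector `x > 0` with `⟨A⟩ x > 0`; the
splitting hypothesis turns this into `|M - A| x < ⟨M⟩ x`. For a Z-matrix `P` with `P x > 0`, a
minimum principle (look at an index minimising `w i / x i`) shows that `P w > 0` forces `w > 0`.
Together with `⟨M⟩ |v| ≤ |M v|` this makes `M` invertible with `⟨M⟩ |M⁻¹| ≤ I`, hence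
`|M⁻¹| |M - A| x < x`, and likewise for `F`. The iteration matrix factors as
`F⁻¹ (F - A) · M⁻¹ (M - A)`, so its modulus strictly contracts `x`, and a nonnegative matrix that
strictly contracts a positive vector has spectral radius less than one.
-/

open Filter NNReal

lemma eventually_norm_pow_le_of_spectralRadius_lt {A : Type*} [NormedRing A] [NormedAlgebra ℂ A]
    [CompleteSpace A] (a : A) {r : ℝ≥0} (h : spectralRadius ℂ a < r) :
    ∀ᶠ k in atTop, ‖a ^ k‖ ≤ r ^ k := by
  have hgelfand := spectrum.pow_nnnorm_pow_one_div_tendsto_nhds_spectralRadius a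
  filter_upwards [hgelfand.eventually_lt_const h, eventually_ne_atTop 0] with k hk hk0
  rw [one_div, ← ENNReal.coe_rpow_of_nonneg _ (by positivity), ENNReal.coe_lt_coe] at hk
  calc ‖a ^ k‖ = ((‖a ^ k‖₊ ^ (k⁻¹ : ℝ)) ^ k : ℝ≥0) := by
        rw [NNReal.rpow_inv_natCast_pow _ hk0]; rfl
    _ ≤ r ^ k := by exact_mod_cast pow_le_pow_left₀ (by positivity) hk.le k

section ZMatrix

variable {ι : Type*} [Fintype ι] {P : Matrix ι ι ℝ} {x w : ι → ℝ}

lemma exists_mulVec_le_of_offDiag_nonpos [Nonempty ι] (hP : ∀ i j, i ≠ j → P i j ≤ 0)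
    (hx : ∀ i, 0 < x i) (w : ι → ℝ) :
    ∃ i, (∀ j, w i / x i ≤ w j / x j) ∧ (P *ᵥ w) i ≤ w i / x i * (P *ᵥ x) i := by
  classical
  obtain ⟨i, -, hi⟩ := Finset.univ.exists_min_image (fun j => w j / x j) Finset.univ_nonempty
  refine ⟨i, fun j => hi j (Finset.mem_univ j), ?_⟩
  rw [mulVec, mulVec, dotProduct, dotProduct, Finset.mul_sum]
  refine Finset.sum_le_sum fun j _ => ?_
  rcases eq_or_ne i j with rfl | hij
  · exact le_of_eq (by field_simp [(hx i).ne'])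
  · have hwj : w i / x i * x j ≤ w j := (le_div_iff₀ (hx j)).mp (hi j (Finset.mem_univ j))
    nlinarith [hP i j hij]

lemma nonneg_of_mulVec_nonneg (hP : ∀ i j, i ≠ j → P i j ≤ 0) (hx : ∀ i, 0 < x i)
    (hPx : ∀ i, 0 < (P *ᵥ x) i) (hPw : ∀ i, 0 ≤ (P *ᵥ w) i) (j : ι) : 0 ≤ w j := by
  have : Nonempty ι := ⟨j⟩
  obtain ⟨i, hmin, hi⟩ := exists_mulVec_le_of_offDiag_nonpos hP hx w
  have : 0 ≤ w i / x i := nonneg_of_mul_nonneg_left ((hPw i).trans hi) (hPx i)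
  simpa using (le_div_iff₀ (hx j)).mp (this.trans (hmin j))

lemma pos_of_mulVec_pos (hP : ∀ i j, i ≠ j → P i j ≤ 0) (hx : ∀ i, 0 < x i)
    (hPx : ∀ i, 0 < (P *ᵥ x) i) (hPw : ∀ i, 0 < (P *ᵥ w) i) (j : ι) : 0 < w j := by
  have : Nonempty ι := ⟨j⟩
  obtain ⟨i, hmin, hi⟩ := exists_mulVec_le_of_offDiag_nonpos hP hx w
  have : 0 < w i / x i := pos_of_mul_pos_left ((hPw i).trans_le hi) (hPx i).le
  exact (div_pos_iff_of_pos_right (hx j)).mp (this.trans_le (hmin j))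

end ZMatrix

section Modulus

variable {l m n : Type*}

lemma cabs_nonneg (X : Matrix m n ℂ) (i : m) (j : n) : 0 ≤ cabs X i j :=
  norm_nonneg _

lemma cabs_one [DecidableEq m] : cabs (1 : Matrix m m ℂ) = 1 := by
  ext i j
  rcases eq_or_ne i j with rfl | h <;> simp [cabs, one_apply, *]

lemma cabs_map_ofReal {P : Matrix m n ℝ} (hP : ∀ i j, 0 ≤ P i j) :
    cabs (P.map Complex.ofReal) = P := by
  ext i j
  simp [cabs, abs_of_nonneg (hP i j)]

variable [Fintype m]

lemma norm_mulVec_le_cabs_mulVec (X : Matrix l m ℂ) (v : m → ℂ) (i : l) :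
    ‖(X *ᵥ v) i‖ ≤ (cabs X *ᵥ fun j => ‖v j‖) i :=
  (norm_sum_le _ _).trans_eq (by simp only [norm_mul]; rfl)

lemma cabs_mul_apply_le (X : Matrix l m ℂ) (Y : Matrix m n ℂ) (i : l) (j : n) :
    cabs (X * Y) i j ≤ (cabs X * cabs Y) i j :=
  norm_mulVec_le_cabs_mulVec X (fun k => Y k j) i

lemma mulVec_mono_of_nonneg {P : Matrix l m ℝ} (hP : ∀ i j, 0 ≤ P i j) {v w : m → ℝ}
    (hvw : v ≤ w) : P *ᵥ v ≤ P *ᵥ w := fun i =>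
  Finset.sum_le_sum fun j _ => mul_le_mul_of_nonneg_left (hvw j) (hP i j)

lemma mulVec_nonneg {P : Matrix l m ℝ} (hP : ∀ i j, 0 ≤ P i j) {v : m → ℝ} (hv : 0 ≤ v) :
    0 ≤ P *ᵥ v := by
  simpa using mulVec_mono_of_nonneg hP hv

lemma mulVec_le_mulVec_of_le {P Q : Matrix l m ℝ} (hPQ : ∀ i j, P i j ≤ Q i j) {v : m → ℝ}
    (hv : 0 ≤ v) : P *ᵥ v ≤ Q *ᵥ v := fun i =>
  Finset.sum_le_sum fun j _ => mul_le_mul_of_nonneg_right (hPQ i j) (hv j)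

lemma cabs_mul_mulVec_le (X : Matrix l m ℂ) (Y : Matrix m n ℂ) [Fintype n] {v : n → ℝ}
    (hv : 0 ≤ v) : cabs (X * Y) *ᵥ v ≤ cabs X *ᵥ (cabs Y *ᵥ v) := by
  rw [mulVec_mulVec]
  exact mulVec_le_mulVec_of_le (cabs_mul_apply_le X Y) hv

end Modulus

section Comparison

variable {ι : Type*} [DecidableEq ι]

lemma compMat_nonpos_of_ne (M : Matrix ι ι ℂ) {i j : ι} (h : i ≠ j) : compMat M i j ≤ 0 := by
  simp [compMat, h]

variable [Fintype ι]

lemma compMat_mulVec_norm_le (M : Matrix ι ι ℂ) (v : ι → ℂ) (i : ι) :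
    (compMat M *ᵥ fun j => ‖v j‖) i ≤ ‖(M *ᵥ v) i‖ := by
  have hoff : ‖∑ j ∈ Finset.univ.erase i, M i j * v j‖
      ≤ ∑ j ∈ Finset.univ.erase i, ‖M i j‖ * ‖v j‖ :=
    (norm_sum_le _ _).trans_eq (by simp only [norm_mul])
  have hcomp : (compMat M *ᵥ fun j => ‖v j‖) i
      = ‖M i i‖ * ‖v i‖ - ∑ j ∈ Finset.univ.erase i, ‖M i j‖ * ‖v j‖ := by
    rw [mulVec, dotProduct, ← Finset.add_sum_erase _ _ (Finset.mem_univ i),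
      sub_eq_add_neg, ← Finset.sum_neg_distrib]
    congr 1
    · simp [compMat]
    · exact Finset.sum_congr rfl fun j hj => by simp [compMat, (Finset.ne_of_mem_erase hj).symm]
  have htri := norm_sub_norm_le (M i i * v i) (-∑ j ∈ Finset.univ.erase i, M i j * v j)
  rw [hcomp, mulVec, dotProduct, ← Finset.add_sum_erase _ _ (Finset.mem_univ i)]
  rw [sub_neg_eq_add, norm_neg, norm_mul] at htri
  linarith

lemma compMat_mul_cabs_le (M X : Matrix ι ι ℂ) (i j : ι) :
    (compMat M * cabs X) i j ≤ cabs (M * X) i j :=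
  compMat_mulVec_norm_le M (fun k => X k j) i

variable {M : Matrix ι ι ℂ} {x : ι → ℝ}

lemma cabs_sub_mulVec_lt_compMat_mulVec {A : Matrix ι ι ℂ}
    (hM : compMat M - cabs (M - A) = compMat A) (hAx : ∀ i, 0 < (compMat A *ᵥ x) i) (i : ι) :
    (cabs (M - A) *ᵥ x) i < (compMat M *ᵥ x) i := by
  rw [← sub_pos, ← Pi.sub_apply, ← sub_mulVec, hM]
  exact hAx i

lemma isUnit_of_compMat_mulVec_pos (hx : ∀ i, 0 < x i) (hMx : ∀ i, 0 < (compMat M *ᵥ x) i) :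
    IsUnit M := by
  rw [isUnit_iff_isUnit_det, isUnit_iff_ne_zero]
  intro hdet
  obtain ⟨v, hv, hMv⟩ := exists_mulVec_eq_zero_iff.mpr hdet
  have hneg : ∀ i, 0 ≤ (compMat M *ᵥ -fun j => ‖v j‖) i := fun i => by
    simpa [mulVec_neg, hMv] using compMat_mulVec_norm_le M v i
  exact hv (funext fun j => norm_le_zero_iff.mp (neg_nonneg.mp
    (nonneg_of_mulVec_nonneg (fun _ _ => compMat_nonpos_of_ne M) hx hMx hneg j)))

lemma compMat_mulVec_cabs_inv_mulVec_le (hM : IsUnit M) {y : ι → ℝ} (hy : 0 ≤ y) :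
    compMat M *ᵥ (cabs M⁻¹ *ᵥ y) ≤ y := by
  rw [mulVec_mulVec]
  calc (compMat M * cabs M⁻¹) *ᵥ y ≤ cabs (M * M⁻¹) *ᵥ y :=
        mulVec_le_mulVec_of_le (compMat_mul_cabs_le M M⁻¹) hy
    _ = y := by rw [mul_nonsing_inv M ((isUnit_iff_isUnit_det M).mp hM), cabs_one, one_mulVec]

lemma cabs_inv_mulVec_lt (hx : ∀ i, 0 < x i) {y : ι → ℝ} (hy : 0 ≤ y)
    (hyx : ∀ i, y i < (compMat M *ᵥ x) i) (i : ι) : (cabs M⁻¹ *ᵥ y) i < x i := by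
  have hMx : ∀ i, 0 < (compMat M *ᵥ x) i := fun i => (hy i).trans_lt (hyx i)
  have hM := isUnit_of_compMat_mulVec_pos hx hMx
  have h := compMat_mulVec_cabs_inv_mulVec_le hM hy
  refine sub_pos.mp (pos_of_mulVec_pos (fun _ _ => compMat_nonpos_of_ne M) hx hMx
    (w := x - cabs M⁻¹ *ᵥ y) (fun j => ?_) i)
  rw [mulVec_sub, Pi.sub_apply]
  linarith [h j, hyx j]

end Comparison

section SpectralRadius

variable {ι : Type*} [Fintype ι] [DecidableEq ι]

lemma specRad_nonneg (P : Matrix ι ι ℝ) : 0 ≤ specRad P :=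
  Real.sSup_nonneg (by rintro _ ⟨z, -, rfl⟩; exact norm_nonneg z)

lemma norm_le_specRad {P : Matrix ι ι ℝ} {z : ℂ} (hz : z ∈ spectrum ℂ (P.map Complex.ofReal)) :
    ‖z‖ ≤ specRad P :=
  le_csSup ((finite_spectrum _).image _).bddAbove ⟨z, hz, rfl⟩

lemma exists_mulVec_eq_smul_of_mem_spectrum {P : Matrix ι ι ℂ} {z : ℂ}
    (hz : z ∈ spectrum ℂ P) : ∃ v ≠ 0, P *ᵥ v = z • v := by
  rw [spectrum.mem_iff, isUnit_iff_isUnit_det, isUnit_iff_ne_zero, not_not] at hz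
  obtain ⟨v, hv, hPv⟩ := exists_mulVec_eq_zero_iff.mpr hz
  refine ⟨v, hv, ?_⟩
  rw [sub_mulVec, Algebra.algebraMap_eq_smul_one, smul_mulVec, one_mulVec, sub_eq_zero] at hPv
  exact hPv.symm

lemma norm_lt_one_of_mem_spectrum {P : Matrix ι ι ℝ} {x : ι → ℝ} (hP : ∀ i j, 0 ≤ P i j)
    (hx : ∀ i, 0 < x i) (hPx : ∀ i, (P *ᵥ x) i < x i) {z : ℂ}
    (hz : z ∈ spectrum ℂ (P.map Complex.ofReal)) : ‖z‖ < 1 := by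
  obtain ⟨v, hv, hPv⟩ := exists_mulVec_eq_smul_of_mem_spectrum hz
  obtain ⟨j, hj⟩ := Function.ne_iff.mp hv
  obtain ⟨i, -, hmax⟩ :=
    Finset.univ.exists_max_image (fun j => ‖v j‖ / x j) ⟨j, Finset.mem_univ j⟩
  set c := ‖v i‖ / x i
  have hc : 0 < c := (div_pos (norm_pos_iff.mpr hj) (hx j)).trans_le (hmax j (Finset.mem_univ j))
  have hvc : (fun j => ‖v j‖) ≤ c • x := fun k =>
    (div_le_iff₀ (hx k)).mp (hmax k (Finset.mem_univ k))
  have hvi : ‖v i‖ = c * x i := (div_mul_cancel₀ _ (hx i).ne').symm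
  refine (mul_lt_iff_lt_one_left (hvi ▸ mul_pos hc (hx i))).mp ?_
  calc ‖z‖ * ‖v i‖ = ‖(P.map Complex.ofReal *ᵥ v) i‖ := by
        rw [hPv, Pi.smul_apply, smul_eq_mul, norm_mul]
    _ ≤ (P *ᵥ fun j => ‖v j‖) i := by
        simpa only [cabs_map_ofReal hP] using norm_mulVec_le_cabs_mulVec (P.map Complex.ofReal) v i
    _ ≤ (P *ᵥ (c • x)) i := mulVec_mono_of_nonneg hP hvc i
    _ = c * (P *ᵥ x) i := by rw [mulVec_smul]; rfl
    _ < c * x i := mul_lt_mul_of_pos_left (hPx i) hc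
    _ = ‖v i‖ := hvi.symm

lemma specRad_lt_one_of_mulVec_lt {P : Matrix ι ι ℝ} {x : ι → ℝ} (hP : ∀ i j, 0 ≤ P i j)
    (hx : ∀ i, 0 < x i) (hPx : ∀ i, (P *ᵥ x) i < x i) : specRad P < 1 := by
  rcases (spectrum ℂ (P.map Complex.ofReal)).eq_empty_or_nonempty with h | h
  · simp [specRad, h]
  · rw [specRad, ((finite_spectrum _).image _).csSup_lt_iff (h.image _)]
    rintro _ ⟨z, hz, rfl⟩
    exact norm_lt_one_of_mem_spectrum hP hx hPx hz

end SpectralRadius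

section MMatrix

attribute [local instance] Matrix.linftyOpNormedRing Matrix.linftyOpNormedAlgebra

variable {ι : Type*} [Fintype ι] [DecidableEq ι]

lemma eventually_norm_pow_le_of_specRad_lt {B : Matrix ι ι ℝ} {s : ℝ} (hs : specRad B < s) :
    ∀ᶠ k in atTop, ‖B ^ k‖ ≤ s ^ k := by
  have hs0 : 0 < s := (specRad_nonneg B).trans_lt hs
  have hρ : spectralRadius ℂ (B.map Complex.ofReal) < s.toNNReal := by
    refine lt_of_le_of_lt (iSup₂_le fun z hz => ?_) ((ENNReal.ofReal_lt_ofReal_iff hs0).mpr hs)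
    rw [← ENNReal.ofReal_coe_nnreal, coe_nnnorm]
    exact ENNReal.ofReal_le_ofReal (norm_le_specRad hz)
  filter_upwards [eventually_norm_pow_le_of_spectralRadius_lt _ hρ] with k hk
  have hmap : (B ^ k).map Complex.ofReal = B.map Complex.ofReal ^ k :=
    map_pow (Complex.ofRealHom.mapMatrix (m := ι)) B k
  have hnorm : ‖(B ^ k).map Complex.ofReal‖ = ‖B ^ k‖ := by simp [linfty_opNorm_def]
  rwa [← hmap, hnorm, Real.coe_toNNReal _ hs0.le] at hk

lemma IsMMat.exists_pos_mulVec_pos {P : Matrix ι ι ℝ} (hP : IsMMat P) :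
    ∃ x : ι → ℝ, (∀ i, 0 < x i) ∧ ∀ i, 0 < (P *ᵥ x) i := by
  obtain ⟨α, hB, hρ⟩ := hP
  set B := α • (1 : Matrix ι ι ℝ) - P
  have hα : 0 < α := (specRad_nonneg B).trans_lt hρ
  obtain ⟨s, hρs, hsα⟩ := exists_between hρ
  set D := α⁻¹ • B
  have hD : ∀ i j, 0 ≤ D i j := fun i j => mul_nonneg (inv_nonneg.mpr hα.le) (hB i j)
  have hsum : Summable (D ^ ·) := by
    refine Summable.of_norm_bounded_eventually_nat
      (summable_geometric_of_lt_one (by have := (specRad_nonneg B).trans hρs.le; positivity)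
        ((inv_mul_lt_one₀ hα).mpr hsα)) ?_
    filter_upwards [eventually_norm_pow_le_of_specRad_lt hρs] with k hk
    rw [smul_pow, norm_smul, norm_pow, Real.norm_of_nonneg (inv_nonneg.mpr hα.le), mul_pow]
    gcongr
  set S := ∑' k, D ^ k
  have hS : ∀ i j, 0 ≤ S i j := fun i j =>
    (Pi.hasSum.mp (Pi.hasSum.mp hsum.hasSum i) j).nonneg fun k => pow_apply_nonneg hD k i j
  have hSD : S = 1 + D * S := by
    have h := hsum.one_sub_mul_tsum_pow
    rwa [sub_mul, one_mul, sub_eq_iff_eq_add] at h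
  have hPS : P * S = α • 1 := by
    have hPD : P = α • (1 - D) := by
      show P = α • (1 - α⁻¹ • (α • 1 - P))
      rw [smul_sub, smul_smul, mul_inv_cancel₀ hα.ne', one_smul, sub_sub_cancel]
    rw [hPD, smul_mul, hsum.one_sub_mul_tsum_pow]
  refine ⟨S *ᵥ fun _ => 1, fun i => ?_, fun i => ?_⟩
  · have hDS : 0 ≤ (D * S) *ᵥ fun _ => (1 : ℝ) := by
      rw [← mulVec_mulVec]
      exact mulVec_nonneg hD (mulVec_nonneg hS fun _ => zero_le_one)
    rw [hSD, add_mulVec, one_mulVec, Pi.add_apply]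
    linarith [show (0 : ℝ) ≤ _ from hDS i]
  · rw [mulVec_mulVec, hPS, smul_mulVec, one_mulVec]
    simpa using hα

end MMatrix

lemma Matrix.one_sub_inv_mul_mul_inv_mul_eq {ι R : Type*} [Fintype ι] [DecidableEq ι] [CommRing R]
    {A M F : Matrix ι ι R} (hM : IsUnit M) (hF : IsUnit F) :
    1 - F⁻¹ * (M + F - A) * (M⁻¹ * A) = F⁻¹ * (F - A) * (M⁻¹ * (M - A)) := by
  have hMM : M * M⁻¹ = 1 := mul_nonsing_inv M ((isUnit_iff_isUnit_det M).mp hM)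
  have hMM' : M⁻¹ * M = 1 := nonsing_inv_mul M ((isUnit_iff_isUnit_det M).mp hM)
  have hFF : F⁻¹ * F = 1 := nonsing_inv_mul F ((isUnit_iff_isUnit_det F).mp hF)
  rw [mul_sub M⁻¹, hMM']
  calc 1 - F⁻¹ * (M + F - A) * (M⁻¹ * A)
      = 1 - F⁻¹ * (M * M⁻¹) * A - F⁻¹ * F * (M⁻¹ * A) + F⁻¹ * A * (M⁻¹ * A) := by noncomm_ring
    _ = F⁻¹ * F - F⁻¹ * A - F⁻¹ * F * (M⁻¹ * A) + F⁻¹ * A * (M⁻¹ * A) := by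
        rw [hMM, hFF, mul_one]
    _ = F⁻¹ * (F - A) * (1 - M⁻¹ * A) := by noncomm_ring

theorem stmt5 {n : ℕ} (A M F : Matrix (Fin n) (Fin n) ℂ)
    (hA : IsHMat A)
    (hM : compMat M - cabs (M - A) = compMat A)
    (hF : compMat F - cabs (F - A) = compMat A) :
    IsUnit M ∧ IsUnit F ∧
      specRad (cabs (1 - F⁻¹ * (M + F - A) * (M⁻¹ * A))) < 1 := by
  obtain ⟨x, hx, hAx⟩ := hA.exists_pos_mulVec_pos
  have hx0 : 0 ≤ x := fun i => (hx i).le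
  have hMx := cabs_sub_mulVec_lt_compMat_mulVec hM hAx
  have hFx := cabs_sub_mulVec_lt_compMat_mulVec hF hAx
  have hMu : IsUnit M := isUnit_of_compMat_mulVec_pos hx fun i =>
    (mulVec_nonneg (cabs_nonneg _) hx0 i).trans_lt (hMx i)
  have hFu : IsUnit F := isUnit_of_compMat_mulVec_pos hx fun i =>
    (mulVec_nonneg (cabs_nonneg _) hx0 i).trans_lt (hFx i)
  refine ⟨hMu, hFu, ?_⟩
  rw [one_sub_inv_mul_mul_inv_mul_eq hMu hFu]
  set u := cabs M⁻¹ *ᵥ (cabs (M - A) *ᵥ x)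
  have hu0 : 0 ≤ u := mulVec_nonneg (cabs_nonneg _) (mulVec_nonneg (cabs_nonneg _) hx0)
  have hux : ∀ i, u i < x i := cabs_inv_mulVec_lt hx (mulVec_nonneg (cabs_nonneg _) hx0) hMx
  have hFAu : cabs (F - A) *ᵥ u ≤ cabs (F - A) *ᵥ x :=
    mulVec_mono_of_nonneg (cabs_nonneg _) fun i => (hux i).le
  have hwx := cabs_inv_mulVec_lt hx (mulVec_nonneg (cabs_nonneg _) hu0)
    fun i => (hFAu i).trans_lt (hFx i)
  have hT : cabs (F⁻¹ * (F - A) * (M⁻¹ * (M - A))) *ᵥ x ≤ cabs F⁻¹ *ᵥ (cabs (F - A) *ᵥ u) :=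
    calc cabs (F⁻¹ * (F - A) * (M⁻¹ * (M - A))) *ᵥ x
        ≤ cabs (F⁻¹ * (F - A)) *ᵥ (cabs (M⁻¹ * (M - A)) *ᵥ x) := cabs_mul_mulVec_le _ _ hx0
      _ ≤ cabs (F⁻¹ * (F - A)) *ᵥ u :=
          mulVec_mono_of_nonneg (cabs_nonneg _) (cabs_mul_mulVec_le _ _ hx0)
      _ ≤ cabs F⁻¹ *ᵥ (cabs (F - A) *ᵥ u) := cabs_mul_mulVec_le _ _ hu0
  exact specRad_lt_one_of_mulVec_lt (cabs_nonneg _) hx fun i => (hT i).trans_lt (hwx i)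
end

section
/- Let f : (ℂⁿ)ᵖ → ℂⁿ be a map and suppose there exists a real n×n matrix 𝒫 with 𝒫 ≥ 0 entrywise, ρ(𝒫) < 1, and such that for all collections X = (X_1,…,X_p) and Y = (Y_1,…,Y_p) of p vectors in ℂⁿ, |f(X) − f(Y)| ≤ 𝒫 · max(|X_1 − Y_1|, …, |X_p − Y_p|) entrywise, where max denotes the entrywise maximum of vectors. Let π : {1,…,n} → {1,…,m} be a map assigning each index to a block. Let Ω_k ⊆ {1,…,m} for each k ∈ ℕ be such that every s ∈ {1,…,m} belongs to Ω_k for infinitely many k, and for each s ∈ {1,…,m} and t ∈ {1,…,p} let δ_{s,t} : {1,…,m} × ℕ → ℕ satisfy δ_{s,t}(q,k) ≤ k for all q, k and lim_{k→∞} δ_{s,t}(q,k) = ∞ for all q. Let x⁰ ∈ ℂⁿ be arbitrary and define the sequence (xᵏ)_{k∈ℕ} in ℂⁿ by: for every k and every index i with s := π(i), x^{k+1}_i := f_i(Z_1, …, Z_p) if s ∈ Ω_k, where for each t ∈ {1,…,p} the vector Z_t ∈ ℂⁿ has components (Z_t)_j := x^{δ_{s,t}(π(j),k)}_j, while x^{k+1}_i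 := xᵏ_i if s ∉ Ω_k. Then there exists x* ∈ ℂⁿ with f(x*,…,x*) = x* and xᵏ converges to x* as k → ∞. -/
/-!
Since `ρ(𝒫) < 1`, pick `ρ(𝒫) < θ < 1`; the Gelfand formula makes `∑ θ⁻ᵏ 𝒫ᵏ 1` converge, and its sum
`v ≥ 1` satisfies `𝒫 v ≤ θ v`. In the weighted maximum norm `max_i |z_i| / v_i` the map
`z ↦ f(z, …, z)` is then a `θ`-contraction, so it has a fixed point `x*`. For the asynchronous
iterates, an error bound `|xᵏ - x*| ≤ c v` holding from some time on is inherited, once all delays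
have passed that time and every block has been updated once more, as `|xᵏ - x*| ≤ θ c v`.
Iterating gives `|xᵏ - x*| ≤ θʳ c v` eventually, for every `r`.
-/

open Matrix Filter

open scoped NNReal Topology

theorem summable_norm_pow_div_of_spectralRadius_lt {A : Type*} [NormedRing A]
    [NormedAlgebra ℂ A] [CompleteSpace A] (a : A) {r : ℝ}
    (h : spectralRadius ℂ a < ENNReal.ofReal r) :
    Summable fun k : ℕ => ‖a ^ k‖ / r ^ k := by
  obtain ⟨r₁, har₁, hr₁r⟩ := ENNReal.lt_iff_exists_nnreal_btwn.1 h
  have hr : 0 < r := ENNReal.ofReal_pos.1 (pos_of_gt hr₁r)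
  have hr₁r' : (r₁ : ℝ) < r := by
    rwa [← ENNReal.ofReal_coe_nnreal, ENNReal.ofReal_lt_ofReal_iff hr] at hr₁r
  refine .of_norm_bounded_eventually_nat
    (summable_geometric_of_lt_one (by positivity) ((div_lt_one hr).2 hr₁r')) ?_
  have hgelfand := spectrum.pow_nnnorm_pow_one_div_tendsto_nhds_spectralRadius a
  filter_upwards [hgelfand.eventually_lt_const har₁, eventually_ge_atTop 1] with k hk hk₁
  have hk₀ : (0 : ℝ) < k := by exact_mod_cast hk₁
  rw [one_div, ENNReal.rpow_inv_lt_iff hk₀, ENNReal.rpow_natCast, ← ENNReal.coe_pow,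
    ENNReal.coe_lt_coe, ← NNReal.coe_lt_coe, coe_nnnorm, NNReal.coe_pow] at hk
  rw [Real.norm_of_nonneg (by positivity), div_pow]
  gcongr

theorem spectralRadius_map_ofReal_le_specRad {ι : Type*} [Fintype ι] [DecidableEq ι]
    (P : Matrix ι ι ℝ) :
    spectralRadius ℂ (P.map Complex.ofReal) ≤ ENNReal.ofReal (specRad P) := by
  refine iSup₂_le fun z hz => ?_
  rw [← ENNReal.ofReal_coe_nnreal, coe_nnnorm]
  exact ENNReal.ofReal_le_ofReal <|
    le_csSup ((Matrix.finite_spectrum _).image _).bddAbove ⟨z, hz, rfl⟩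

namespace Matrix

variable {ι : Type*} [Fintype ι]

theorem mulVec_le_mulVec_of_nonneg {P : Matrix ι ι ℝ} (hP : ∀ i j, 0 ≤ P i j) {w w' : ι → ℝ}
    (h : w ≤ w') : P *ᵥ w ≤ P *ᵥ w' :=
  fun i => dotProduct_le_dotProduct_of_nonneg_left h (hP i)

section LinftyOp

attribute [local instance] Matrix.linftyOpNormedAddCommGroup Matrix.linftyOpNormedRing
  Matrix.linftyOpNormedAlgebra

variable [DecidableEq ι]

theorem summable_linfty_opNorm_pow_div_of_specRad_lt (P : Matrix ι ι ℝ) {θ : ℝ} (hθ₀ : 0 < θ)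
    (hθ : specRad P < θ) : Summable fun k : ℕ => ‖P ^ k‖ / θ ^ k := by
  have hnorm (k : ℕ) : ‖P ^ k‖ = ‖P.map Complex.ofReal ^ k‖ := by
    change _ = ‖P.map Complex.ofRealHom ^ k‖
    rw [← Matrix.map_pow]
    simp [linfty_opNorm_def]
  simp_rw [hnorm]
  exact summable_norm_pow_div_of_spectralRadius_lt _ <|
    (spectralRadius_map_ofReal_le_specRad P).trans_lt ((ENNReal.ofReal_lt_ofReal_iff hθ₀).2 hθ)

theorem exists_one_le_and_mulVec_le_smul_of_specRad_lt (P : Matrix ι ι ℝ)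
    (hP : ∀ i j, 0 ≤ P i j) {θ : ℝ} (hθ₀ : 0 < θ) (hθ : specRad P < θ) :
    ∃ v : ι → ℝ, 1 ≤ v ∧ P *ᵥ v ≤ θ • v := by
  set u : ℕ → ι → ℝ := fun k => (θ ^ k)⁻¹ • (P ^ k *ᵥ 1) with hu
  have hu_succ (k : ℕ) : P *ᵥ u k = θ • u (k + 1) := by
    simp only [hu, mulVec_smul, smul_smul, pow_succ', ← mulVec_mulVec]
    rw [mul_inv, ← mul_assoc, mul_inv_cancel₀ hθ₀.ne', one_mul]
  have hu_nonneg (k : ℕ) : 0 ≤ u k := by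
    induction k with
    | zero => simp [hu, zero_le_one]
    | succ k ih =>
      have := mulVec_le_mulVec_of_nonneg hP ih
      rw [mulVec_zero, hu_succ] at this
      exact fun i => (mul_nonneg_iff_of_pos_left hθ₀).1 (this i)
  obtain ⟨v, hv⟩ : Summable u := by
    refine .of_norm_bounded (summable_linfty_opNorm_pow_div_of_specRad_lt P hθ₀ hθ) fun k => ?_
    rw [norm_smul, norm_inv, norm_pow, Real.norm_of_nonneg hθ₀.le, inv_mul_eq_div]
    gcongr
    exact (linfty_opNorm_mulVec _ _).trans (mul_le_of_le_one_right (norm_nonneg _)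
      ((pi_norm_le_iff_of_nonneg zero_le_one).2 fun _ => by simp))
  have hv_tail : HasSum (fun k => u (k + 1)) (v - 1) := by
    simpa [hu] using (hasSum_nat_add_iff' 1).2 hv
  have hPv : P *ᵥ v = θ • (v - 1) :=
    (hv.map (mulVecLin P) (continuous_const.matrix_mulVec continuous_id)).unique <| by
      simpa only [Function.comp_def, mulVecLin_apply, hu_succ] using hv_tail.const_smul θ
  refine ⟨v, sub_nonneg.1 (hv_tail.nonneg fun k => hu_nonneg _), ?_⟩
  rw [hPv]
  exact smul_le_smul_of_nonneg_left (sub_le_self _ zero_le_one) hθ₀.le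

end LinftyOp

end Matrix

section WeightedContraction

variable {ι κ E : Type*} [Fintype ι] [NormedAddCommGroup E]

theorem norm_sub_le_mul_of_mulVec_le {f : (κ → ι → E) → ι → E} {P : Matrix ι ι ℝ}
    (hP : ∀ i j, 0 ≤ P i j)
    (hf : ∀ X Y : κ → ι → E, ∀ i, ‖f X i - f Y i‖ ≤ ∑ j, P i j * ⨆ t, ‖X t j - Y t j‖)
    {v : ι → ℝ} (hv : 0 ≤ v) {θ : ℝ} (hPv : P *ᵥ v ≤ θ • v) {c : ℝ} (hc : 0 ≤ c)
    {X Y : κ → ι → E} (hXY : ∀ t j, ‖X t j - Y t j‖ ≤ c * v j) (i : ι) :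
    ‖f X i - f Y i‖ ≤ θ * c * v i :=
  calc ‖f X i - f Y i‖ ≤ (P *ᵥ fun j => ⨆ t, ‖X t j - Y t j‖) i := hf X Y i
    _ ≤ (P *ᵥ (c • v)) i :=
      mulVec_le_mulVec_of_nonneg hP (fun j => Real.iSup_le (hXY · j) (mul_nonneg hc (hv j))) i
    _ = c * (P *ᵥ v) i := by rw [mulVec_smul]; rfl
    _ ≤ c * (θ * v i) := mul_le_mul_of_nonneg_left (hPv i) hc
    _ = θ * c * v i := by ring

/-- Rescaling the coordinates by `v` turns the weighted maximum norm into the sup norm, where the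
Banach fixed-point theorem applies. -/
theorem exists_fixedPoint_of_weighted_contraction [NormedSpace ℝ E] [CompleteSpace E]
    (g : (ι → E) → ι → E) {v : ι → ℝ} (hv : ∀ i, 0 < v i) {θ : ℝ} (hθ₀ : 0 ≤ θ) (hθ₁ : θ < 1)
    (hg : ∀ c, 0 ≤ c → ∀ z w : ι → E, (∀ j, ‖z j - w j‖ ≤ c * v j) →
      ∀ i, ‖g z i - g w i‖ ≤ θ * c * v i) :
    ∃ z, g z = z := by
  set h : (ι → E) → ι → E := fun z i => (v i)⁻¹ • g (fun j => v j • z j) i with hh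
  have hcontr : ContractingWith (⟨θ, hθ₀⟩ : ℝ≥0) h := by
    refine ⟨hθ₁, LipschitzWith.of_dist_le_mul fun z w => ?_⟩
    refine (dist_pi_le_iff (by positivity)).2 fun i => ?_
    have hzw (j : ι) : ‖v j • z j - v j • w j‖ ≤ dist z w * v j := by
      rw [← smul_sub, norm_smul, Real.norm_of_nonneg (hv j).le, mul_comm, ← dist_eq_norm]
      exact mul_le_mul_of_nonneg_right (dist_le_pi_dist z w j) (hv j).le
    rw [dist_eq_norm, hh, ← smul_sub, norm_smul, norm_inv, Real.norm_of_nonneg (hv i).le,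
      inv_mul_le_iff₀ (hv i)]
    change _ ≤ v i * (θ * dist z w)
    linarith [hg _ dist_nonneg _ _ hzw i]
  set z := ContractingWith.fixedPoint h hcontr
  refine ⟨fun j => v j • z j, funext fun i => ?_⟩
  have hfix : (v i)⁻¹ • g (fun j => v j • z j) i = z i :=
    congrFun (ContractingWith.fixedPoint_isFixedPt hcontr) i
  conv_rhs => rw [← hfix, smul_inv_smul₀ (hv i).ne']

end WeightedContraction

section Asynchronous

theorem le_of_le_after_update {α : Type*} [LE α] {y : ℕ → α} {U : ℕ → Prop} {K k₀ : ℕ} {b : α}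
    (hkeep : ∀ k, ¬U k → y (k + 1) = y k) (hupd : ∀ k ≥ K, U k → y (k + 1) ≤ b)
    (hk₀ : K ≤ k₀) (hU : U k₀) : ∀ k ≥ k₀ + 1, y k ≤ b := by
  intro k hk
  induction k, hk using Nat.le_induction with
  | base => exact hupd k₀ hk₀ hU
  | succ k hk ih =>
    by_cases hUk : U k
    · exact hupd k (by omega) hUk
    · rw [hkeep k hUk]
      exact ih

variable {ι σ κ : Type*} {π : ι → σ} {Ω : ℕ → Set σ}
  {δ : σ → κ → σ → ℕ → ℕ} {e : ℕ → ι → ℝ} {v : ι → ℝ} {θ c : ℝ}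

/-- `e k i` stands for the error `|xᵏᵢ - x*ᵢ|` of the asynchronous iteration. -/
def IsAsyncContraction (π : ι → σ) (Ω : ℕ → Set σ) (δ : σ → κ → σ → ℕ → ℕ) (v : ι → ℝ) (θ : ℝ)
    (e : ℕ → ι → ℝ) : Prop :=
  ∀ c, 0 ≤ c → ∀ k i, π i ∈ Ω k →
    (∀ t j, e (δ (π i) t (π j) k) j ≤ c * v j) → e (k + 1) i ≤ θ * c * v i

theorem forall_le_mul_of_async (hθ : θ ≤ 1) (hv : 0 ≤ v) (hc : 0 ≤ c)
    (hδ : ∀ s t q k, δ s t q k ≤ k)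
    (hupd : IsAsyncContraction π Ω δ v θ e)
    (hkeep : ∀ k i, π i ∉ Ω k → e (k + 1) i = e k i) (h₀ : ∀ i, e 0 i ≤ c * v i) :
    ∀ k i, e k i ≤ c * v i := by
  intro k
  induction k using Nat.strong_induction_on with
  | _ k ih =>
    intro i
    rcases k with _ | k
    · exact h₀ i
    by_cases hi : π i ∈ Ω k
    · refine (hupd c hc k i hi fun t j => ih _ (Nat.lt_succ_of_le (hδ ..)) j).trans ?_
      exact mul_le_mul_of_nonneg_right (mul_le_of_le_one_left hc hθ) (hv i)
    · rw [hkeep k i hi]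
      exact ih k k.lt_succ_self i

theorem eventually_le_mul_of_async [Fintype ι] [Fintype σ] [Fintype κ]
    (hΩ : ∀ s K, ∃ k ≥ K, s ∈ Ω k)
    (hδ : ∀ s t q, Tendsto (δ s t q) atTop atTop)
    (hupd : IsAsyncContraction π Ω δ v θ e)
    (hkeep : ∀ k i, π i ∉ Ω k → e (k + 1) i = e k i) (hc : 0 ≤ c)
    (h : ∀ᶠ k in atTop, ∀ i, e k i ≤ c * v i) :
    ∀ᶠ k in atTop, ∀ i, e k i ≤ θ * c * v i := by
  obtain ⟨K, hK⟩ := eventually_atTop.1 h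
  obtain ⟨K₁, hK₁⟩ := eventually_atTop.1 <| eventually_all.2 fun s => eventually_all.2 fun t =>
    eventually_all.2 fun q => (hδ s t q).eventually_ge_atTop K
  choose k₀ hk₀ hk₀Ω using fun s => hΩ s K₁
  refine eventually_all.2 fun i => eventually_atTop.2 ⟨k₀ (π i) + 1, ?_⟩
  refine le_of_le_after_update (U := fun k => π i ∈ Ω k) (hkeep · i) (fun k hk hi => ?_)
    (hk₀ (π i)) (hk₀Ω (π i))
  exact hupd c hc k i hi fun t j => hK _ (hK₁ k hk _ _ _) j

theorem tendsto_zero_of_async [Fintype ι] [Fintype σ] [Fintype κ] (hθ₀ : 0 ≤ θ) (hθ₁ : θ < 1)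
    (hv : 0 ≤ v) (he : ∀ k i, 0 ≤ e k i)
    (hΩ : ∀ s K, ∃ k ≥ K, s ∈ Ω k) (hδle : ∀ s t q k, δ s t q k ≤ k)
    (hδlim : ∀ s t q, Tendsto (δ s t q) atTop atTop)
    (hupd : IsAsyncContraction π Ω δ v θ e)
    (hkeep : ∀ k i, π i ∉ Ω k → e (k + 1) i = e k i) (hc : 0 ≤ c) (h₀ : ∀ i, e 0 i ≤ c * v i)
    (i : ι) : Tendsto (fun k => e k i) atTop (𝓝 0) := by
  have hbound (r : ℕ) : ∀ᶠ k in atTop, ∀ j, e k j ≤ θ ^ r * c * v j := by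
    induction r with
    | zero =>
      simp only [pow_zero, one_mul]
      exact .of_forall (forall_le_mul_of_async hθ₁.le hv hc hδle hupd hkeep h₀)
    | succ r ih =>
      simpa only [pow_succ', mul_assoc] using
        eventually_le_mul_of_async hΩ hδlim hupd hkeep (by positivity) ih
  have hlim : Tendsto (fun r : ℕ => θ ^ r * c * v i) atTop (𝓝 0) := by
    simpa using ((tendsto_pow_atTop_nhds_zero_of_lt_one hθ₀ hθ₁).mul_const c).mul_const (v i)
  refine tendsto_order.2 ⟨fun a ha => .of_forall fun k => ha.trans_le (he k i), fun ε hε => ?_⟩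
  obtain ⟨r, hr⟩ := (hlim.eventually (gt_mem_nhds hε)).exists
  filter_upwards [hbound r] with k hk using (hk i).trans_lt hr

end Asynchronous

theorem stmt10 {n m p : ℕ}
    (f : (Fin p → (Fin n → ℂ)) → (Fin n → ℂ))
    (P : Matrix (Fin n) (Fin n) ℝ)
    (hPnonneg : ∀ i j, 0 ≤ P i j)
    (hPρ : specRad P < 1)
    (hLip : ∀ X Y : Fin p → (Fin n → ℂ), ∀ i,
      ‖f X i - f Y i‖ ≤
        ∑ j, P i j * (⨆ t, ‖X t j - Y t j‖))
    (π : Fin n → Fin m)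
    (Ω : ℕ → Set (Fin m))
    (hΩ : ∀ s : Fin m, ∀ K : ℕ, ∃ k ≥ K, s ∈ Ω k)
    (δ : Fin m → Fin p → Fin m → ℕ → ℕ)
    (hδle : ∀ s t q k, δ s t q k ≤ k)
    (hδlim : ∀ s t q, Tendsto (fun k => δ s t q k) atTop atTop)
    (x : ℕ → Fin n → ℂ)
    (hupd : ∀ k i, π i ∈ Ω k →
      x (k + 1) i = f (fun t j => x (δ (π i) t (π j) k) j) i)
    (hkeep : ∀ k i, π i ∉ Ω k → x (k + 1) i = x k i) :
    ∃ xstar : Fin n → ℂ, f (fun _ => xstar) = xstar ∧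
      Tendsto x atTop (nhds xstar) := by
  obtain ⟨θ, hθ, hθ₁⟩ := exists_between (max_lt hPρ one_pos)
  have hθ₀ : 0 < θ := (le_max_right _ _).trans_lt hθ
  obtain ⟨v, hv₁, hPv⟩ := Matrix.exists_one_le_and_mulVec_le_smul_of_specRad_lt P hPnonneg hθ₀
    ((le_max_left _ _).trans_lt hθ)
  have hv₀ : 0 ≤ v := zero_le_one.trans hv₁
  have hcontr (c : ℝ) (hc : 0 ≤ c) (X Y : Fin p → Fin n → ℂ)
      (hXY : ∀ t j, ‖X t j - Y t j‖ ≤ c * v j) (i : Fin n) : ‖f X i - f Y i‖ ≤ θ * c * v i :=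
    norm_sub_le_mul_of_mulVec_le hPnonneg hLip hv₀ hPv hc hXY i
  obtain ⟨xstar, hfix⟩ := exists_fixedPoint_of_weighted_contraction (fun z => f fun _ => z)
    (fun i => one_pos.trans_le (hv₁ i)) hθ₀.le hθ₁ fun c hc z w hzw => hcontr c hc _ _ fun _ => hzw
  refine ⟨xstar, hfix, tendsto_pi_nhds.2 fun i => tendsto_iff_norm_sub_tendsto_zero.2 ?_⟩
  refine tendsto_zero_of_async (e := fun k i => ‖x k i - xstar i‖) hθ₀.le hθ₁ hv₀
    (fun _ _ => norm_nonneg _) hΩ hδle hδlim (fun c hc k i hi hdelay => ?_)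
    (fun k i hi => by rw [hkeep k i hi]) (norm_nonneg (x 0 - xstar)) (fun j => ?_) i
  · have h := hcontr c hc _ (fun _ => xstar) hdelay i
    rwa [hfix, ← hupd k i hi] at h
  · exact (norm_le_pi_norm (x 0 - xstar) j).trans (le_mul_of_one_le_right (norm_nonneg _) (hv₁ j))
end
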